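/- Let A_1, …, A_L be elements of a complex Banach algebra, let s = Σ_{ℓ=1}^{L} ‖A_ℓ‖, and let n ≥ 1. Then ‖(exp(A_1/n) · exp(A_2/n) ⋯ exp(A_L/n))^n − exp(A_1 + A_2 + ⋯ + A_L)‖ ≤ s² · exp(2s) / n. In particular, if each ‖A_ℓ‖ ≤ c for a fixed constant c, the error is bounded by c² L² exp(2cL)/n, i.e., it is L² · O(1/n). -/

import Mathlib

/-!
Write `S = ∑ ℓ, A ℓ / n` and `t = s / n`. Both the ordered product `P = ∏ ℓ, exp (A ℓ / n)` and
`Q = exp S` agree with `1 + S` up to `exp t - 1 - t ≤ t² exp t / 2`: for `Q` this is the tail of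
the exponential series, for `P` it follows by induction on the number of factors, since the bound
`‖x - 1 - a‖ ≤ exp α - 1 - α` (with `‖a‖ ≤ α`) is multiplicative. Hence `‖P - Q‖ ≤ t² exp t`, and
telescoping `Pⁿ - Qⁿ = ∑ Pᵏ (P - Q) Qⁿ⁻¹⁻ᵏ` costs a factor `n exp ((n - 1) t)`, giving
`‖Pⁿ - exp (∑ ℓ, A ℓ)‖ ≤ n t² exp (n t) = s² exp s / n`.
-/

open NormedSpace Nat

section NormedRing

variable {R : Type*} [NormedRing R]

/- Closeness to `1` is measured by `‖x - 1‖ ≤ M - 1` rather than by `‖x‖ ≤ M`, because `‖1‖` may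
exceed `1` in a `NormedRing`. -/

theorem norm_mul_le_of_norm_sub_one_le_right {x : R} {M : ℝ} (hx : ‖x - 1‖ ≤ M - 1) (z : R) :
    ‖z * x‖ ≤ ‖z‖ * M :=
  calc ‖z * x‖ = ‖z * (x - 1) + z‖ := by rw [mul_sub, mul_one, sub_add_cancel]
    _ ≤ ‖z‖ * ‖x - 1‖ + ‖z‖ := norm_add_le_of_le (norm_mul_le _ _) le_rfl
    _ ≤ ‖z‖ * M := by nlinarith [norm_nonneg z]

theorem norm_mul_le_of_norm_sub_one_le_left {x : R} {M : ℝ} (hx : ‖x - 1‖ ≤ M - 1) (z : R) :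
    ‖x * z‖ ≤ M * ‖z‖ :=
  calc ‖x * z‖ = ‖(x - 1) * z + z‖ := by rw [sub_mul, one_mul, sub_add_cancel]
    _ ≤ ‖x - 1‖ * ‖z‖ + ‖z‖ := norm_add_le_of_le (norm_mul_le _ _) le_rfl
    _ ≤ M * ‖z‖ := by nlinarith [norm_nonneg z]

theorem norm_mul_sub_one_le {x y : R} {M N : ℝ} (hx : ‖x - 1‖ ≤ M - 1) (hy : ‖y - 1‖ ≤ N - 1) :
    ‖x * y - 1‖ ≤ M * N - 1 := by
  have hN : 1 ≤ N := by linarith [norm_nonneg (y - 1)]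
  calc ‖x * y - 1‖ = ‖(x - 1) * y + (y - 1)‖ := by congr 1; noncomm_ring
    _ ≤ (M - 1) * N + (N - 1) :=
      norm_add_le_of_le ((norm_mul_le_of_norm_sub_one_le_right hy _).trans (by gcongr)) hy
    _ = M * N - 1 := by ring

theorem norm_pow_sub_one_le {x : R} {M : ℝ} (hx : ‖x - 1‖ ≤ M - 1) (n : ℕ) :
    ‖x ^ n - 1‖ ≤ M ^ n - 1 := by
  induction n with
  | zero => simp
  | succ n ih => simpa [pow_succ] using norm_mul_sub_one_le ih hx

theorem norm_pow_sub_pow_le {x y : R} {M : ℝ} (hx : ‖x - 1‖ ≤ M - 1) (hy : ‖y - 1‖ ≤ M - 1)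
    (n : ℕ) : ‖x ^ n - y ^ n‖ ≤ n * M ^ (n - 1) * ‖x - y‖ := by
  induction n with
  | zero => simp
  | succ n ih =>
    have hstep : ‖x ^ (n + 1) - y ^ (n + 1)‖ ≤ ‖x ^ n - y ^ n‖ * M + M ^ n * ‖x - y‖ :=
      calc ‖x ^ (n + 1) - y ^ (n + 1)‖ = ‖(x ^ n - y ^ n) * x + y ^ n * (x - y)‖ := by
            congr 1; noncomm_ring
        _ ≤ _ := norm_add_le_of_le (norm_mul_le_of_norm_sub_one_le_right hx _)
            (norm_mul_le_of_norm_sub_one_le_left (norm_pow_sub_one_le hy n) _)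
    rcases n with _ | n
    · simp
    · have hM : 0 ≤ M := by linarith [norm_nonneg (x - 1)]
      refine hstep.trans ?_
      calc ‖x ^ (n + 1) - y ^ (n + 1)‖ * M + M ^ (n + 1) * ‖x - y‖
          ≤ (n + 1 : ℕ) * M ^ n * ‖x - y‖ * M + M ^ (n + 1) * ‖x - y‖ := by gcongr; simpa using ih
        _ = (n + 1 + 1 : ℕ) * M ^ (n + 1 + 1 - 1) * ‖x - y‖ := by push_cast; ring

theorem norm_sub_one_le_of_norm_sub_one_sub_le {x a : R} {α : ℝ} (ha : ‖a‖ ≤ α)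
    (hx : ‖x - 1 - a‖ ≤ Real.exp α - 1 - α) : ‖x - 1‖ ≤ Real.exp α - 1 :=
  calc ‖x - 1‖ = ‖(x - 1 - a) + a‖ := by rw [sub_add_cancel]
    _ ≤ (Real.exp α - 1 - α) + α := norm_add_le_of_le hx ha
    _ = Real.exp α - 1 := by ring

theorem norm_mul_sub_one_sub_add_le {x y a b : R} {α β : ℝ} (ha : ‖a‖ ≤ α)
    (hx : ‖x - 1 - a‖ ≤ Real.exp α - 1 - α) (hb : ‖b‖ ≤ β)
    (hy : ‖y - 1 - b‖ ≤ Real.exp β - 1 - β) :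
    ‖x * y - 1 - (a + b)‖ ≤ Real.exp (α + β) - 1 - (α + β) := by
  have hy₁ : ‖y - 1‖ ≤ Real.exp β - 1 := norm_sub_one_le_of_norm_sub_one_sub_le hb hy
  have hα : 0 ≤ α := (norm_nonneg a).trans ha
  calc ‖x * y - 1 - (a + b)‖ = ‖(x - 1 - a) * y + a * (y - 1) + (y - 1 - b)‖ := by
        congr 1; noncomm_ring
    _ ≤ (Real.exp α - 1 - α) * Real.exp β + α * (Real.exp β - 1) + (Real.exp β - 1 - β) := by
        refine norm_add₃_le.trans (add_le_add_three ?_ ?_ hy)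
        · exact (norm_mul_le_of_norm_sub_one_le_right hy₁ _).trans (by gcongr)
        · exact (norm_mul_le _ _).trans (mul_le_mul ha hy₁ (norm_nonneg _) hα)
    _ = Real.exp (α + β) - 1 - (α + β) := by rw [Real.exp_add]; ring

end NormedRing

theorem Real.hasSum_exp_sub_one_sub (t : ℝ) :
    HasSum (fun k : ℕ => t ^ (k + 2) / (k + 2)!) (Real.exp t - 1 - t) := by
  simpa [Finset.sum_range_succ, sub_sub, Real.exp_eq_exp_ℝ] using
    (hasSum_nat_add_iff' 2).mpr (expSeries_div_hasSum_exp t)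

theorem Real.exp_sub_one_sub_le {t : ℝ} (ht : 0 ≤ t) :
    Real.exp t - 1 - t ≤ t ^ 2 / 2 * Real.exp t := by
  have hexp : HasSum (fun k : ℕ => t ^ 2 / 2 * (t ^ k / k !)) (t ^ 2 / 2 * Real.exp t) := by
    simpa [Real.exp_eq_exp_ℝ] using (expSeries_div_hasSum_exp t).mul_left (t ^ 2 / 2)
  refine hasSum_le (fun k => ?_) (Real.hasSum_exp_sub_one_sub t) hexp
  have hfact : 2 * k ! ≤ (k + 2)! := by
    rw [factorial_succ, factorial_succ, ← mul_assoc]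
    exact Nat.mul_le_mul_right _ (by nlinarith)
  calc t ^ (k + 2) / (k + 2)! ≤ t ^ (k + 2) / (2 * k ! : ℕ) := by gcongr
    _ = t ^ 2 / 2 * (t ^ k / k !) := by push_cast; ring

section Exp

variable {𝔸 : Type*} [NormedRing 𝔸] [NormedAlgebra ℚ 𝔸] [CompleteSpace 𝔸]

theorem hasSum_exp_sub_one_sub (x : 𝔸) :
    HasSum (fun k : ℕ => ((k + 2)!⁻¹ : ℚ) • x ^ (k + 2)) (exp x - 1 - x) := by
  simpa [Finset.sum_range_succ, sub_sub] using
    (hasSum_nat_add_iff' 2).mpr (exp_series_hasSum_exp' (𝕂 := ℚ) x)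

theorem norm_exp_sub_one_sub_le {x : 𝔸} {u : ℝ} (hx : ‖x‖ ≤ u) :
    ‖exp x - 1 - x‖ ≤ Real.exp u - 1 - u := by
  refine (hasSum_exp_sub_one_sub x).norm_le_of_bounded (Real.hasSum_exp_sub_one_sub u) fun k => ?_
  rw [norm_smul, div_eq_inv_mul]
  gcongr
  · simp [← Rat.norm_cast_real]
  · exact (norm_pow_le' x (by omega)).trans (by gcongr)

theorem norm_prod_map_exp_sub_one_sub_sum_le (l : List 𝔸) :
    ‖(l.map exp).prod - 1 - l.sum‖ ≤
      Real.exp (l.map norm).sum - 1 - (l.map norm).sum := by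
  induction l with
  | nil => simp
  | cons x l ih =>
    simpa using norm_mul_sub_one_sub_add_le le_rfl (norm_exp_sub_one_sub_le le_rfl)
      (l.le_sum_of_subadditive norm norm_zero.le norm_add_le) ih

theorem norm_prod_map_exp_sub_exp_sum_le (l : List 𝔸) :
    ‖(l.map exp).prod - exp l.sum‖ ≤ (l.map norm).sum ^ 2 * Real.exp (l.map norm).sum := by
  set σ := (l.map norm).sum
  have hsum : ‖l.sum‖ ≤ σ := l.le_sum_of_subadditive norm norm_zero.le norm_add_le
  calc ‖(l.map exp).prod - exp l.sum‖
        = ‖((l.map exp).prod - 1 - l.sum) - (exp l.sum - 1 - l.sum)‖ := by congr 1; abel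
    _ ≤ (Real.exp σ - 1 - σ) + (Real.exp σ - 1 - σ) :=
        norm_sub_le_of_le (norm_prod_map_exp_sub_one_sub_sum_le l) (norm_exp_sub_one_sub_le hsum)
    _ ≤ σ ^ 2 * Real.exp σ := by
        linarith [Real.exp_sub_one_sub_le ((norm_nonneg _).trans hsum)]

theorem norm_prod_map_exp_pow_sub_exp_sum_pow_le (l : List 𝔸) (n : ℕ) :
    ‖(l.map exp).prod ^ n - exp l.sum ^ n‖ ≤
      n * (l.map norm).sum ^ 2 * Real.exp (n * (l.map norm).sum) := by
  set σ := (l.map norm).sum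
  have hsum : ‖l.sum‖ ≤ σ := l.le_sum_of_subadditive norm norm_zero.le norm_add_le
  have hP₁ : ‖(l.map exp).prod - 1‖ ≤ Real.exp σ - 1 :=
    norm_sub_one_le_of_norm_sub_one_sub_le hsum (norm_prod_map_exp_sub_one_sub_sum_le l)
  have hQ₁ : ‖exp l.sum - 1‖ ≤ Real.exp σ - 1 :=
    norm_sub_one_le_of_norm_sub_one_sub_le hsum (norm_exp_sub_one_sub_le hsum)
  rcases n.eq_zero_or_pos with rfl | hn
  · simp
  calc _ ≤ n * Real.exp σ ^ (n - 1) * ‖(l.map exp).prod - exp l.sum‖ :=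
        norm_pow_sub_pow_le hP₁ hQ₁ n
    _ ≤ n * Real.exp σ ^ (n - 1) * (σ ^ 2 * Real.exp σ) := by
        gcongr; exact norm_prod_map_exp_sub_exp_sum_le l
    _ = n * σ ^ 2 * (Real.exp σ ^ (n - 1) * Real.exp σ) := by ring
    _ = n * σ ^ 2 * Real.exp (n * σ) := by rw [pow_sub_one_mul hn.ne', Real.exp_nat_mul]

end Exp

/-- **Trotter bound for `L` terms.** For elements `A 1, …, A L` of a complex
Banach algebra, with `s = ∑ ℓ, ‖A ℓ‖` and `n ≥ 1`,
`‖(exp(A 1/n) ⋯ exp(A L/n))^n − exp (∑ ℓ, A ℓ)‖ ≤ s² · exp(2s) / n`;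
in particular if each `‖A ℓ‖ ≤ c` the error is `≤ c²L²exp(2cL)/n`, i.e.
`L² · O(1/n)`. -/
theorem trotter_error_bound_multi {𝔸 : Type*} [NormedRing 𝔸] [NormedAlgebra ℂ 𝔸]
    [CompleteSpace 𝔸] (L : ℕ) (A : Fin L → 𝔸) (s : ℝ) (hs : s = ∑ ℓ, ‖A ℓ‖)
    (n : ℕ) (hn : 1 ≤ n) :
    ‖(List.ofFn fun ℓ => exp ((n : ℂ)⁻¹ • A ℓ)).prod ^ n - exp (∑ ℓ, A ℓ)‖ ≤
      s ^ 2 * Real.exp (2 * s) / n := by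
  let := NormedAlgebra.restrictScalars ℚ ℂ 𝔸
  have hn₀ : (n : ℝ) ≠ 0 := by positivity
  have hs₀ : 0 ≤ s := hs ▸ by positivity
  set l := List.ofFn fun ℓ => (n : ℂ)⁻¹ • A ℓ
  have hl_norm : (l.map norm).sum = s / n := by
    simp [l, List.sum_ofFn, norm_smul, hs, div_eq_inv_mul, Finset.mul_sum]
  have hl_exp : exp l.sum ^ n = exp (∑ ℓ, A ℓ) := by
    rw [← exp_nsmul, List.sum_ofFn, ← Finset.smul_sum, ← Nat.cast_smul_eq_nsmul ℂ, smul_smul,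
      mul_inv_cancel₀ (mod_cast hn₀), one_smul]
  have hl_prod : (List.ofFn fun ℓ => exp ((n : ℂ)⁻¹ • A ℓ)) = l.map exp := List.map_ofFn.symm
  rw [hl_prod, ← hl_exp]
  calc _ ≤ n * (s / n) ^ 2 * Real.exp (n * (s / n)) :=
        hl_norm ▸ norm_prod_map_exp_pow_sub_exp_sum_pow_le l n
    _ = s ^ 2 * Real.exp s / n := by rw [mul_div_cancel₀ s hn₀]; field_simp
    _ ≤ s ^ 2 * Real.exp (2 * s) / n := by gcongr; linarith
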